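/- Fix real constants D > 0, K, and h > 0, and for a function c : ℤ² → ℝ define F(c) : ℤ² → ℝ by F(c)(p) = (D/h²)·(Σ_{q ∼ p} c(q) − 4·c(p)) + K, where q ∼ p ranges over the four lattice neighbors of p. Suppose F(c)(p) ≤ 0 for every p ∈ ℤ², and let 0 < τ ≤ h²/(4D). Then: (a) F(c + τ·F(c))(p) ≤ 0 for every p ∈ ℤ²; and (b) consequently the sequence defined by c₀ = c and c_{k+1} = c_k + τ·F(c_k) is pointwise nonincreasing in k. -/
import Mathlib


noncomputable section

/-- The discrete operator `F(c)(p) = (D/h²)·(Σ_{q∼p} c(q) − 4c(p)) + K` on the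
integer lattice `ℤ²`, where the sum ranges over the four lattice neighbours. -/
def latticeOp (D h K : ℝ) (c : ℤ × ℤ → ℝ) (p : ℤ × ℤ) : ℝ :=
  D / h ^ 2 *
    ((c (p.1 + 1, p.2) + c (p.1 - 1, p.2) + c (p.1, p.2 + 1) + c (p.1, p.2 - 1)) -
      4 * c p) + K

lemma latticeOp_step (D h K τ : ℝ) (hD : 0 < D) (hh : 0 < h)
    (hτ : 0 < τ) (hτ' : τ ≤ h ^ 2 / (4 * D))
    (c : ℤ × ℤ → ℝ) (hc : ∀ p, latticeOp D h K c p ≤ 0) :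
    ∀ p, latticeOp D h K (fun q => c q + τ * latticeOp D h K c q) p ≤ 0 := by
  intro p
  set g := latticeOp D h K c with hg
  have hA : 0 < D / h ^ 2 := div_pos hD (by positivity)
  have key : latticeOp D h K (fun q => c q + τ * g q) p =
      g p + τ * (D / h ^ 2) *
        ((g (p.1 + 1, p.2) + g (p.1 - 1, p.2) + g (p.1, p.2 + 1) + g (p.1, p.2 - 1)) -
          4 * g p) := by
    simp only [latticeOp, hg]
    ring
  rw [key]
  have h1 := hc (p.1 + 1, p.2)
  have h2 := hc (p.1 - 1, p.2)
  have h3 := hc (p.1, p.2 + 1)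
  have h4 := hc (p.1, p.2 - 1)
  have h5 := hc p
  have hτA : τ * (D / h ^ 2) ≤ 1 / 4 := by
    have h2' : τ * (4 * D) ≤ h ^ 2 := (le_div_iff₀ (by positivity)).mp hτ'
    rw [mul_div_assoc', div_le_iff₀ (by positivity)]
    linarith
  nlinarith [mul_pos hτ hA, mul_nonneg (mul_pos hτ hA).le (neg_nonneg.mpr h1),
    mul_nonneg (mul_pos hτ hA).le (neg_nonneg.mpr h2),
    mul_nonneg (mul_pos hτ hA).le (neg_nonneg.mpr h3),
    mul_nonneg (mul_pos hτ hA).le (neg_nonneg.mpr h4),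
    mul_nonneg (sub_nonneg.mpr hτA) (neg_nonneg.mpr h5)]

/-- Monotone Dynamics Lemma: If `F(c) ≤ 0` everywhere on `ℤ²` and
`0 < τ ≤ h²/(4D)`, then (a) `F(c + τ·F(c)) ≤ 0` everywhere, and (b) the iteration
`c₀ = c`, `c_{k+1} = c_k + τ·F(c_k)` is pointwise nonincreasing in `k`. -/
theorem lattice_monotone_dynamics (D h K τ : ℝ) (hD : 0 < D) (hh : 0 < h)
    (hτ : 0 < τ) (hτ' : τ ≤ h ^ 2 / (4 * D))
    (c : ℤ × ℤ → ℝ) (hc : ∀ p, latticeOp D h K c p ≤ 0) :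
    (∀ p, latticeOp D h K (fun q => c q + τ * latticeOp D h K c q) p ≤ 0) ∧
      ∀ p, Antitone fun k : ℕ =>
        ((fun u q => u q + τ * latticeOp D h K u q)^[k] c) p := by
  refine ⟨latticeOp_step D h K τ hD hh hτ hτ' c hc, ?_⟩
  have hall : ∀ k, ∀ p,
      latticeOp D h K ((fun u q => u q + τ * latticeOp D h K u q)^[k] c) p ≤ 0 := by
    intro k
    induction k with
    | zero => simpa using hc
    | succ n ih =>
      rw [Function.iterate_succ_apply']
      exact latticeOp_step D h K τ hD hh hτ hτ' _ ih
  intro p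
  apply antitone_nat_of_succ_le
  intro n
  rw [Function.iterate_succ_apply']
  have := hall n p
  nlinarith [mul_nonpos_of_nonneg_of_nonpos hτ.le this]
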